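/- arXiv:1506.00018 — 2 statements merged into one kernel-verified Lean document; each statement's English description precedes it below -/
import Mathlib

section
/- Let X be a Lefschetz complex over a ring R with unity and let 𝒱 be a multivector field on X with X invariant. Then the family 𝓑 of all basic sets of 𝒱 is a Morse decomposition of X. -/
open scoped Classical

namespace CMVF

variable {R : Type*} [Ring R] {X : Type*} [Fintype X]

/-- A Lefschetz complex over `R` with cells `X`. -/
structure Lefschetz (R : Type*) [Ring R] (X : Type*) [Fintype X] where
  dim : X → ℕ
  κ : X → X → R
  dim_facet : ∀ x y, κ x y ≠ 0 → dim x = dim y + 1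
  κ_sq : ∀ x z, (∑ y : X, κ x y * κ y z) = 0

namespace Lefschetz

variable (L : Lefschetz R X)

/-- The face order `y ≤κ x` : the partial order generated by the facet relation. -/
def le (y x : X) : Prop := Relation.ReflTransGen (fun a b => L.κ b a ≠ 0) y x

/-- Closure of a set of cells: all faces of cells of `A`. -/
def cls (A : Set X) : Set X := {z | ∃ a ∈ A, L.le z a}

/-- Closure of a single cell. -/
def clPt (x : X) : Set X := L.cls {x}

/-- The minimal open set containing `x`. -/
def opn (x : X) : Set X := {z | L.le x z}

/-- `A` is closed. -/
def Closed (A : Set X) : Prop := L.cls A = A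

/-- The mouth of `A`. -/
def mo (A : Set X) : Set X := L.cls A \ A

/-- `A` is proper: its mouth is closed. -/
def Proper (A : Set X) : Prop := L.Closed (L.mo A)

/-- Relative closure within an ambient subcomplex `W`. -/
def clsIn (W A : Set X) : Set X := L.cls A ∩ W

/-- Relative mouth within an ambient subcomplex `W`. -/
def moIn (W A : Set X) : Set X := L.clsIn W A \ A

/-- The boundary operator of the subcomplex determined by `A`
(`∂ x = ∑ y ∈ A, κ x y • y` for `x ∈ A`). -/
noncomputable def bd (A : Set X) : (X → R) →ₗ[R] (X → R) where
  toFun f := fun y => if y ∈ A then ∑ x : X, (if x ∈ A then f x * L.κ x y else 0) else 0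
  map_add' f g := by
    funext y
    by_cases hy : y ∈ A
    · simp only [hy, if_true, Pi.add_apply]
      rw [← Finset.sum_add_distrib]
      refine Finset.sum_congr rfl fun x _ => ?_
      by_cases hx : x ∈ A <;> simp [hx, add_mul]
    · simp [hy]
  map_smul' r f := by
    funext y
    by_cases hy : y ∈ A
    · simp only [hy, if_true, Pi.smul_apply, smul_eq_mul, RingHom.id_apply]
      rw [Finset.mul_sum]
      refine Finset.sum_congr rfl fun x _ => ?_
      by_cases hx : x ∈ A <;> simp [hx, mul_assoc]
    · simp [hy]

/-- The `n`-chains of the subcomplex determined by `A`. -/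
noncomputable def chainGroup (A : Set X) (n : ℕ) : Submodule R (X → R) :=
  Submodule.span R {f | ∃ x ∈ A, L.dim x = n ∧ f = Pi.single x 1}

/-- The `n`-cycles of the subcomplex determined by `A`. -/
noncomputable def cycles (A : Set X) (n : ℕ) : Submodule R (X → R) :=
  L.chainGroup A n ⊓ LinearMap.ker (L.bd A)

/-- The `n`-boundaries of the subcomplex determined by `A`. -/
noncomputable def boundaries (A : Set X) (n : ℕ) : Submodule R (X → R) :=
  (L.chainGroup A (n + 1)).map (L.bd A)

/-- The Lefschetz homology `H^κ_n(A)` of the subcomplex determined by `A`. -/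
noncomputable def homology (A : Set X) (n : ℕ) : Type _ :=
  (L.cycles A n) ⧸ ((L.boundaries A n).comap (L.cycles A n).subtype)

noncomputable instance homologyAddCommGroup (A : Set X) (n : ℕ) :
    AddCommGroup (L.homology A n) :=
  inferInstanceAs (AddCommGroup
    ((L.cycles A n) ⧸ ((L.boundaries A n).comap (L.cycles A n).subtype)))

noncomputable instance homologyModule (A : Set X) (n : ℕ) :
    Module R (L.homology A n) :=
  inferInstanceAs (Module R
    ((L.cycles A n) ⧸ ((L.boundaries A n).comap (L.cycles A n).subtype)))

/-- `A` is a zero space: its Lefschetz homology vanishes. -/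
def HomologyZero (A : Set X) : Prop := ∀ n, Subsingleton (L.homology A n)

/-- The Poincaré polynomial `p_A(t) = ∑ rank H^κ_n(A) tⁿ`. -/
noncomputable def poincare (A : Set X) : Polynomial ℕ :=
  ∑ n ∈ Finset.image L.dim Finset.univ,
    Polynomial.C (Module.finrank R (L.homology A n)) * Polynomial.X ^ n

/-- `V` is a multivector: proper, with a unique maximal element. -/
def IsMV (V : Set X) : Prop :=
  L.Proper V ∧ ∃! m, m ∈ V ∧ ∀ x ∈ V, L.le x m

/-- A regular multivector: one with vanishing Lefschetz homology. -/
def Regular (V : Set X) : Prop := L.HomologyZero V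

end Lefschetz

/-- A combinatorial multivector field on a Lefschetz complex: a partition into multivectors. -/
structure MVField {R : Type*} [Ring R] {X : Type*} [Fintype X] (L : Lefschetz R X) where
  mvs : Set (Set X)
  isMV : ∀ V ∈ mvs, L.IsMV V
  cover : ∀ x : X, ∃! V, V ∈ mvs ∧ x ∈ V

namespace MVField

variable {L : Lefschetz R X} (F : MVField L)

/-- `[x]` : the multivector containing `x`. -/
noncomputable def mclass (x : X) : Set X := (F.cover x).exists.choose

lemma mclass_spec (x : X) : F.mclass x ∈ F.mvs ∧ x ∈ F.mclass x :=
  (F.cover x).exists.choose_spec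

/-- `x★` : the dominant cell of the multivector containing `x`. -/
noncomputable def star (x : X) : X :=
  ((F.isMV _ (F.mclass_spec x).1).2).exists.choose

/-- `[x]°` : the regular part of the multivector of `x`. -/
noncomputable def regPart (x : X) : Set X :=
  if L.Regular (F.mclass x) then F.mclass x else F.mclass x \ {F.star x}

/-- The multivalued map `Π_𝒱`. -/
noncomputable def Pi (x : X) : Set X :=
  if x = F.star x then L.clPt x \ F.regPart x else {F.star x}

/-- The multivalued map of the multivector field restricted to the subcomplex `W`. -/
noncomputable def PiIn (W : Set X) (x : X) : Set X := F.Pi x ∩ W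

/-- `φ : ℤ → X` is a full solution of the multivector field restricted to `W`. -/
def IsSolIn (W : Set X) (φ : ℤ → X) : Prop := ∀ i, φ (i + 1) ∈ F.PiIn W (φ i)

/-- There is a full solution (of the field restricted to `W`) through `x` with values in `A`. -/
def FullSolThroughIn (W : Set X) (x : X) (A : Set X) : Prop :=
  ∃ φ : ℤ → X, F.IsSolIn W φ ∧ (∃ i, φ i = x) ∧ ∀ i, φ i ∈ A

/-- `A` is `𝒱`-compatible. -/
def Compat (A : Set X) : Prop := ∀ x ∈ A, F.mclass x ⊆ A

/-- `[A]⁻` : the maximal `𝒱`-compatible subset of `A`. -/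
def lowerC (A : Set X) : Set X := {x ∈ A | F.mclass x ⊆ A}

/-- `[A]⁺` : the minimal `𝒱`-compatible superset of `A`. -/
def upperC (A : Set X) : Set X := ⋃ x ∈ A, F.mclass x

/-- `Inv A`, the invariant part of `A`, computed in the subcomplex `W`. -/
def InvPartIn (W A : Set X) : Set X :=
  {x ∈ A | F.FullSolThroughIn W (F.star x) (F.lowerC A)}

/-- `A` is invariant (within the subcomplex `W`). -/
def InvariantIn (W A : Set X) : Prop := F.InvPartIn W A = A

/-- `φ` is a path (solution) on the integer interval `[a,b]`, within the subcomplex `W`. -/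
def IsPathOnIn (W : Set X) (a b : ℤ) (φ : ℤ → X) : Prop :=
  ∀ i, a ≤ i → i < b → φ (i + 1) ∈ F.PiIn W (φ i)

/-- `S` admits an internal tangency within the subcomplex `W`. -/
def HasInternalTangencyIn (W S : Set X) : Prop :=
  ∃ (a b : ℤ) (φ : ℤ → X), a ≤ b ∧ F.IsPathOnIn W a b φ ∧
    (∀ i, a ≤ i → i ≤ b → φ i ∈ L.clsIn W S) ∧ φ a ∈ S ∧ φ b ∈ S ∧
    ∃ i, a ≤ i ∧ i ≤ b ∧ φ i ∈ L.moIn W S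

/-- `S` is an isolated invariant set within the subcomplex `W`. -/
def IsoInvIn (W S : Set X) : Prop :=
  F.InvariantIn W S ∧ ¬ F.HasInternalTangencyIn W S

/-- `N` is a trapping region within the subcomplex `W`. -/
def TrappingIn (W N : Set X) : Prop :=
  N ⊆ W ∧ F.Compat N ∧ ∀ x ∈ N, F.PiIn W x ⊆ N

/-- `N` is a backward trapping region within the subcomplex `W`. -/
def BackTrappingIn (W N : Set X) : Prop :=
  N ⊆ W ∧ F.Compat N ∧ ∀ x ∈ W, ∀ y ∈ F.PiIn W x, y ∈ N → x ∈ N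

/-- `A` is an attractor within the subcomplex `W`. -/
def AttractorIn (W A : Set X) : Prop :=
  ∃ N, F.TrappingIn W N ∧ A = F.InvPartIn W N

/-- `A` is a repeller within the subcomplex `W`. -/
def RepellerIn (W A : Set X) : Prop :=
  ∃ N, F.BackTrappingIn W N ∧ A = F.InvPartIn W N

/-- The α-limit set of a full solution `φ`. -/
def alphaIn (W : Set X) (φ : ℤ → X) : Set X :=
  ⋂ k : ℕ, F.InvPartIn W (F.upperC (φ '' {i : ℤ | i ≤ -(k : ℤ)}))

/-- The ω-limit set of a full solution `φ`. -/
def omegaIn (W : Set X) (φ : ℤ → X) : Set X :=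
  ⋂ k : ℕ, F.InvPartIn W (F.upperC (φ '' {i : ℤ | (k : ℤ) ≤ i}))

/-- `C(A',A)` : the set of cells lying on connections running from `A'` to `A`. -/
def ConnIn (W A' A : Set X) : Set X :=
  {x | ∃ φ : ℤ → X, F.IsSolIn W φ ∧ (∃ i, φ i = F.star x) ∧
        F.alphaIn W φ ⊆ A' ∧ F.omegaIn W φ ⊆ A}

/-- `(A, Rp)` is an attractor-repeller pair in the subcomplex `W`. -/
def ARPairIn (W A Rp : Set X) : Prop :=
  F.AttractorIn W A ∧ F.RepellerIn W Rp ∧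
    A = F.InvPartIn W (W \ Rp) ∧ Rp = F.InvPartIn W (W \ A)

/-- `M` is a Morse decomposition of the subcomplex `W`, with admissible order `le`. -/
def MorseDecompIn (W : Set X) {P : Type*} [Finite P] (le : P → P → Prop)
    (M : P → Set X) : Prop :=
  IsPartialOrder P le ∧
  (∀ r, F.IsoInvIn W (M r)) ∧
  (∀ r r', r ≠ r' → Disjoint (M r) (M r')) ∧
  (∀ φ : ℤ → X, F.IsSolIn W φ →
    ∃ r r', le r r' ∧ F.alphaIn W φ ⊆ M r' ∧ F.omegaIn W φ ⊆ M r) ∧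
  (∀ φ : ℤ → X, F.IsSolIn W φ → ∀ r,
    F.alphaIn W φ ⊆ M r → F.omegaIn W φ ⊆ M r → Set.range φ ⊆ M r)

/-- The Morse set `M(I)` of a family of sets indexed by `I ⊆ P`. -/
def MorseSetIn (W : Set X) {P : Type*} (M : P → Set X) (I : Set P) : Set X :=
  ⋃ r ∈ I, ⋃ r' ∈ I, F.ConnIn W (M r') (M r)

/-- `(P₁, P₂)` is an index pair for the isolated invariant set `S`. -/
def IndexPair (S P₁ P₂ : Set X) : Prop :=
  L.Closed P₁ ∧ L.Closed P₂ ∧ P₂ ⊆ P₁ ∧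
  (∀ x ∈ P₂, ∀ y ∈ F.Pi x, y ∈ P₁ → y ∈ P₂) ∧
  (∀ x ∈ P₁, (∃ y ∈ F.Pi x, y ∉ P₁) → x ∈ P₂) ∧
  S = F.InvPartIn Set.univ (P₁ \ P₂)

/-- `x ⤳_A y` : there is a path of length at least two in `A` from `x★` to `y★`. -/
def PathConn (A : Set X) (x y : X) : Prop :=
  ∃ (a b : ℤ) (φ : ℤ → X), a < b ∧
    (∀ i, a ≤ i → i < b → φ (i + 1) ∈ F.Pi (φ i)) ∧
    (∀ i, a ≤ i → i ≤ b → φ i ∈ A) ∧ φ a = F.star x ∧ φ b = F.star y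

/-- The chain recurrent set. -/
def CR : Set X := {x | F.PathConn Set.univ x x}

/-- `B` is a basic set: an equivalence class of mutual connectedness in `CR`. -/
def IsBasicSet (B : Set X) : Prop :=
  ∃ x ∈ F.CR, B = {y ∈ F.CR | F.PathConn Set.univ x y ∧ F.PathConn Set.univ y x}

/-- The set `E_P` of cells of `P₁` all of whose forward solutions meet `P₂`. -/
def Ep (P₁ P₂ : Set X) : Set X :=
  {x ∈ P₁ | ∀ φ : ℕ → X, φ 0 = x → (∀ i, φ (i + 1) ∈ F.Pi (φ i)) → ∃ i, φ i ∈ P₂}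

/-- The preorder `≤_𝒱` induced by the arrows of the multivector field. -/
def leV : X → X → Prop := Relation.ReflTransGen (fun y x => y ∈ F.Pi x)

/-- The multivector field is acyclic: `≤_𝒱` is a partial order. -/
def Acyclic : Prop := ∀ x y, F.leV x y → F.leV y x → x = y

end MVField

end CMVF

open CMVF

variable {R : Type*} [Ring R] {X : Type*} [Fintype X]

/-!
Leaving a non-dominant cell leads straight to the dominant cell of its multivector, so `x ⤳ y`
is the transitive closure of the arrows of `Π_𝒱` taken between `x★` and `y★`, and basic sets are
its strongly connected components carrying a cycle. Each cell of a basic set lies on a cycle,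
which unrolls to a periodic full solution, so basic sets are invariant; a path leaving and
re-entering a basic set closes up to a cycle through it, so there is no internal tangency.
By finiteness a full solution visits some `z` infinitely often in the past and some `w`
infinitely often in the future; its α-limit set lies in the basic set of `z`, its ω-limit set
in that of `w`, and `z ⤳ w` orders the two. If both limit sets lie in one basic set, every value
of the solution sits between visits to it, hence belongs to it.
-/

namespace CMVF.MVField

open Relation Filter

variable {L : Lefschetz R X}

def step (F : MVField L) (x y : X) : Prop := y ∈ F.Pi x

variable {F : MVField L} {W A B : Set X} {x y z w : X}

lemma mclass_eq_of_mem (h : y ∈ F.mclass x) : F.mclass y = F.mclass x :=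
  (F.cover y).unique (F.mclass_spec y) ⟨(F.mclass_spec x).1, h⟩

lemma star_spec (x : X) : F.star x ∈ F.mclass x ∧ ∀ z ∈ F.mclass x, L.le z (F.star x) :=
  ((F.isMV _ (F.mclass_spec x).1).2).exists.choose_spec

lemma star_mem_mclass (x : X) : F.star x ∈ F.mclass x := (star_spec x).1

lemma star_eq_of_mem (h : y ∈ F.mclass x) : F.star y = F.star x := by
  have hy := star_spec (F := F) y
  rw [mclass_eq_of_mem h] at hy
  exact ((F.isMV _ (F.mclass_spec x).1).2).unique hy (star_spec x)

lemma star_star (x : X) : F.star (F.star x) = F.star x := star_eq_of_mem (star_mem_mclass x)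

lemma step_star (h : x ≠ F.star x) : F.step x (F.star x) := by
  simp [step, MVField.Pi, h]

lemma eq_star_of_step (hxy : F.step x y) (h : x ≠ F.star x) : y = F.star x := by
  simpa [step, MVField.Pi, h] using hxy

lemma reflTransGen_star (x : X) : ReflTransGen F.step x (F.star x) := by
  by_cases h : x = F.star x
  · rw [← h]
  · exact .single (step_star h)

lemma reflTransGen_star_of_transGen (h : TransGen F.step x y) :
    ReflTransGen F.step (F.star x) y := by
  obtain ⟨d, hxd, hdy⟩ := TransGen.head'_iff.mp h
  by_cases hx : x = F.star x
  · rw [← hx]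
    exact h.to_reflTransGen
  · rwa [← eq_star_of_step hxd hx]

lemma reflTransGen_star_star (h : ReflTransGen F.step x y) :
    ReflTransGen F.step (F.star x) (F.star y) := by
  rcases reflTransGen_iff_eq_or_transGen.mp h with rfl | h
  · rfl
  · exact (reflTransGen_star_of_transGen h).trans (reflTransGen_star y)

section Paths

variable {φ : ℤ → X} {a b : ℤ}

lemma IsPathOnIn.mono {a' b' : ℤ} (hφ : F.IsPathOnIn W a b φ) (ha : a ≤ a') (hb : b' ≤ b) :
    F.IsPathOnIn W a' b' φ :=
  fun i hi hib => hφ i (ha.trans hi) (hib.trans_le hb)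

lemma IsSolIn.isPathOnIn (hφ : F.IsSolIn W φ) (a b : ℤ) : F.IsPathOnIn W a b φ :=
  fun i _ _ => hφ i

lemma IsPathOnIn.reflTransGen (hφ : F.IsPathOnIn W a b φ) (hab : a ≤ b) :
    ReflTransGen F.step (φ a) (φ b) := by
  induction b, hab using Int.leInduction with
  | base => rfl
  | succ b hab ih => exact (ih (hφ.mono le_rfl (by omega))).tail (hφ b hab (by omega)).1

lemma IsPathOnIn.transGen (hφ : F.IsPathOnIn W a b φ) (hab : a < b) :
    TransGen F.step (φ a) (φ b) :=
  .head' (hφ a le_rfl hab).1 ((hφ.mono (by omega) le_rfl).reflTransGen (by omega))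

lemma IsSolIn.reflTransGen (hφ : F.IsSolIn W φ) (hab : a ≤ b) :
    ReflTransGen F.step (φ a) (φ b) :=
  (hφ.isPathOnIn a b).reflTransGen hab

lemma exists_isPathOnIn_univ_of_transGen (h : TransGen F.step x y) :
    ∃ (n : ℤ) (φ : ℤ → X), 0 < n ∧ F.IsPathOnIn Set.univ 0 n φ ∧ φ 0 = x ∧ φ n = y := by
  induction h with
  | @single y hxy =>
    refine ⟨1, Function.update (fun _ => x) 1 y, one_pos, fun i h0 h1 => ?_, by simp, by simp⟩
    obtain rfl : i = 0 := by omega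
    simpa [MVField.PiIn, step] using hxy
  | @tail y z _ hyz ih =>
    obtain ⟨n, φ, hn, hφ, h0, hy⟩ := ih
    refine ⟨n + 1, Function.update φ (n + 1) z, by omega, fun i h0 h1 => ?_, ?_, by simp⟩
    · rcases (show i < n ∨ i = n by omega) with hi | rfl
      · simpa [Function.update_of_ne (show i + 1 ≠ n + 1 by omega),
          Function.update_of_ne (show i ≠ n + 1 by omega)] using hφ i h0 hi
      · simpa [hy, MVField.PiIn, step] using hyz
    · simpa [Function.update_of_ne (show (0 : ℤ) ≠ n + 1 by omega)] using h0

/-- A closed path unrolls to a periodic full solution. -/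
lemma IsPathOnIn.exists_isSolIn_range_eq (hφ : F.IsPathOnIn W a b φ) (hab : a < b)
    (hper : φ a = φ b) :
    ∃ ψ : ℤ → X, F.IsSolIn W ψ ∧ Set.range ψ = φ '' Set.Icc a b := by
  set m := b - a
  have hm : 0 < m := by omega
  refine ⟨fun i => φ (a + i % m), fun i => ?_, ?_⟩
  · have h0 := Int.emod_nonneg i hm.ne'
    have h1 := Int.emod_lt_of_pos i hm
    have hnext : φ (a + (i + 1) % m) = φ (a + i % m + 1) := by
      rw [← Int.emod_add_emod]
      rcases (show i % m + 1 < m ∨ i % m + 1 = m by omega) with hlt | heq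
      · rw [Int.emod_eq_of_lt (by omega) hlt, add_assoc]
      · rw [heq, Int.emod_self, add_zero, hper, add_assoc, heq]
        congr 1
        omega
    simpa only [hnext] using hφ (a + i % m) (by omega) (by omega)
  · ext y
    constructor
    · rintro ⟨i, rfl⟩
      exact ⟨a + i % m, ⟨by have := Int.emod_nonneg i hm.ne'; omega,
        by have := Int.emod_lt_of_pos i hm; omega⟩, rfl⟩
    · rintro ⟨j, ⟨haj, hjb⟩, rfl⟩
      rcases hjb.lt_or_eq with hjb | rfl
      · refine ⟨j - a, show φ (a + (j - a) % m) = φ j from ?_⟩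
        rw [Int.emod_eq_of_lt (by omega) (by omega), add_sub_cancel]
      · exact ⟨0, by simp [hper]⟩

end Paths

section PathConn

lemma pathConn_univ_iff :
    F.PathConn Set.univ x y ↔ TransGen F.step (F.star x) (F.star y) := by
  constructor
  · rintro ⟨a, b, φ, hab, hφ, -, ha, hb⟩
    rw [← ha, ← hb]
    exact IsPathOnIn.transGen (W := Set.univ) (fun i hai hib => ⟨hφ i hai hib, trivial⟩) hab
  · intro h
    obtain ⟨n, φ, hn, hφ, h0, hn'⟩ := exists_isPathOnIn_univ_of_transGen h
    exact ⟨0, n, φ, hn, fun i hi hin => (hφ i hi hin).1, fun _ _ _ => trivial, h0, hn'⟩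

lemma PathConn.trans (hxy : F.PathConn Set.univ x y) (hyz : F.PathConn Set.univ y z) :
    F.PathConn Set.univ x z :=
  pathConn_univ_iff.mpr ((pathConn_univ_iff.mp hxy).trans (pathConn_univ_iff.mp hyz))

lemma pathConn_congr {x' y' : X} (hx : F.star x = F.star x') (hy : F.star y = F.star y') :
    F.PathConn A x y ↔ F.PathConn A x' y' := by
  rw [PathConn, PathConn, hx, hy]

lemma mem_CR_of_transGen (h : TransGen F.step x x) : x ∈ F.CR :=
  pathConn_univ_iff.mpr
    (TransGen.trans_right (reflTransGen_star_of_transGen h) (h.trans_left (reflTransGen_star x)))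

lemma pathConn_of_mem_CR_of_reflTransGen (hx : x ∈ F.CR) (h : ReflTransGen F.step x y) :
    F.PathConn Set.univ x y :=
  pathConn_univ_iff.mpr ((pathConn_univ_iff.mp hx).trans_left (reflTransGen_star_star h))

lemma pathConn_of_reflTransGen_of_mem_CR (h : ReflTransGen F.step x y) (hy : y ∈ F.CR) :
    F.PathConn Set.univ x y :=
  pathConn_univ_iff.mpr (TransGen.trans_right (reflTransGen_star_star h) (pathConn_univ_iff.mp hy))

lemma IsSolIn.mem_CR {φ : ℤ → X} {a b : ℤ} (hφ : F.IsSolIn W φ) (hab : a < b)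
    (hper : φ a = φ b) : φ a ∈ F.CR := by
  have h := (hφ.isPathOnIn a b).transGen hab
  rw [← hper] at h
  exact mem_CR_of_transGen h

end PathConn

section Compat

lemma mem_upperC {u : X} : u ∈ F.upperC A ↔ ∃ a ∈ A, u ∈ F.mclass a := by
  simp [MVField.upperC]

lemma subset_upperC : A ⊆ F.upperC A :=
  fun a ha => mem_upperC.mpr ⟨a, ha, (F.mclass_spec a).2⟩

lemma compat_upperC : F.Compat (F.upperC A) := by
  intro u hu v hv
  obtain ⟨a, ha, hua⟩ := mem_upperC.mp hu
  rw [mclass_eq_of_mem hua] at hv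
  exact mem_upperC.mpr ⟨a, ha, hv⟩

lemma lowerC_eq_self (hA : F.Compat A) : F.lowerC A = A :=
  Set.ext fun _ => ⟨fun h => h.1, fun h => ⟨h, hA _ h⟩⟩

lemma mem_invPartIn_of_isSolIn {ψ : ℤ → X} (hA : F.Compat A) (hx : x ∈ A)
    (hψ : F.IsSolIn W ψ) (hstar : F.star x ∈ Set.range ψ) (hrange : Set.range ψ ⊆ A) :
    x ∈ F.InvPartIn W A :=
  ⟨hx, ψ, hψ, hstar, fun i => (lowerC_eq_self hA).symm ▸ hrange ⟨i, rfl⟩⟩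

end Compat

section BasicSet

def basicSet (F : MVField L) (x : X) : Set X :=
  {y ∈ F.CR | F.PathConn Set.univ x y ∧ F.PathConn Set.univ y x}

lemma mem_basicSet :
    y ∈ F.basicSet x ↔ F.PathConn Set.univ x y ∧ F.PathConn Set.univ y x :=
  ⟨fun h => h.2, fun h => ⟨h.2.trans h.1, h⟩⟩

lemma mem_basicSet_self (hx : x ∈ F.CR) : x ∈ F.basicSet x := mem_basicSet.mpr ⟨hx, hx⟩

lemma isBasicSet_basicSet (hx : x ∈ F.CR) : F.IsBasicSet (F.basicSet x) := ⟨x, hx, rfl⟩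

lemma basicSet_eq_of_mem (h : y ∈ F.basicSet x) : F.basicSet y = F.basicSet x := by
  obtain ⟨hxy, hyx⟩ := mem_basicSet.mp h
  ext z
  simp only [mem_basicSet]
  exact ⟨fun ⟨h₁, h₂⟩ => ⟨hxy.trans h₁, h₂.trans hyx⟩,
    fun ⟨h₁, h₂⟩ => ⟨hyx.trans h₁, h₂.trans hxy⟩⟩

lemma IsBasicSet.eq_basicSet (hB : F.IsBasicSet B) (hy : y ∈ B) : B = F.basicSet y := by
  obtain ⟨x, -, rfl⟩ := hB
  exact (basicSet_eq_of_mem hy).symm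

lemma IsBasicSet.disjoint {B' : Set X} (hB : F.IsBasicSet B) (hB' : F.IsBasicSet B')
    (hne : B ≠ B') : Disjoint B B' :=
  Set.disjoint_left.mpr fun _ hu hu' => hne ((hB.eq_basicSet hu).trans (hB'.eq_basicSet hu').symm)

lemma IsBasicSet.pathConn (hB : F.IsBasicSet B) (hy : y ∈ B) (hz : z ∈ B) :
    F.PathConn Set.univ y z := by
  rw [hB.eq_basicSet hy] at hz
  exact (mem_basicSet.mp hz).1

lemma mem_basicSet_of_star_eq (hyz : F.star y = F.star z) (hz : z ∈ F.basicSet x) :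
    y ∈ F.basicSet x := by
  rw [mem_basicSet, pathConn_congr rfl hyz, pathConn_congr hyz rfl]
  exact mem_basicSet.mp hz

lemma compat_basicSet : F.Compat (F.basicSet x) :=
  fun _ hy _ hz => mem_basicSet_of_star_eq (star_eq_of_mem hz) hy

lemma mem_basicSet_of_reflTransGen {p q c : X} (hp : p ∈ F.basicSet x) (hq : q ∈ F.basicSet x)
    (hpc : ReflTransGen F.step p c) (hcq : ReflTransGen F.step c q) : c ∈ F.basicSet x :=
  mem_basicSet.mpr
    ⟨(mem_basicSet.mp hp).1.trans (pathConn_of_mem_CR_of_reflTransGen hp.1 hpc),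
      (pathConn_of_reflTransGen_of_mem_CR hcq hq.1).trans (mem_basicSet.mp hq).2⟩

lemma IsPathOnIn.image_subset_basicSet {φ : ℤ → X} {a b : ℤ} (hφ : F.IsPathOnIn W a b φ)
    (ha : φ a ∈ F.basicSet x) (hb : φ b ∈ F.basicSet x) : φ '' Set.Icc a b ⊆ F.basicSet x := by
  rintro _ ⟨i, ⟨hai, hib⟩, rfl⟩
  exact mem_basicSet_of_reflTransGen ha hb ((hφ.mono le_rfl (by omega)).reflTransGen hai)
    ((hφ.mono hai le_rfl).reflTransGen hib)

lemma invariantIn_basicSet : F.InvariantIn Set.univ (F.basicSet x) := by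
  refine Set.Subset.antisymm (fun _ hy => hy.1) fun y hy => ?_
  obtain ⟨a, b, φ, hab, hφ, -, ha, hb⟩ := hy.1
  have hφ' : F.IsPathOnIn Set.univ a b φ := fun i hai hib => ⟨hφ i hai hib, trivial⟩
  obtain ⟨ψ, hψ, hrange⟩ := hφ'.exists_isSolIn_range_eq hab (ha.trans hb.symm)
  have hstar : F.star y ∈ F.basicSet x := mem_basicSet_of_star_eq (star_star y) hy
  refine mem_invPartIn_of_isSolIn compat_basicSet hy hψ ?_ ?_ <;> rw [hrange]
  · exact ⟨a, ⟨le_rfl, hab.le⟩, ha⟩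
  · exact hφ'.image_subset_basicSet (ha ▸ hstar) (hb ▸ hstar)

lemma isoInvIn_basicSet : F.IsoInvIn Set.univ (F.basicSet x) :=
  ⟨invariantIn_basicSet, fun ⟨_, _, _, _, hφ, _, ha, hb, i, hai, hib, hmo⟩ =>
    hmo.2 (hφ.image_subset_basicSet ha hb ⟨i, ⟨hai, hib⟩, rfl⟩)⟩

lemma IsBasicSet.isoInvIn (hB : F.IsBasicSet B) : F.IsoInvIn Set.univ B := by
  obtain ⟨x, -, rfl⟩ := hB
  exact isoInvIn_basicSet

end BasicSet

section Limits

variable {φ : ℤ → X}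

lemma exists_frequently_eq {α β : Type*} [Finite β] (f : α → β) (l : Filter α) [l.NeBot] :
    ∃ b, ∃ᶠ a in l, f a = b :=
  frequently_exists.mp (.of_forall fun a => ⟨f a, rfl⟩)

lemma upperC_image_subset_basicSet (hφ : F.IsSolIn W φ) {I : Set ℤ}
    (hI : ∀ i ∈ I, ∃ a b, a < b ∧ a ≤ i ∧ i ≤ b ∧ φ a = z ∧ φ b = z) :
    F.upperC (φ '' I) ⊆ F.basicSet z := by
  intro u hu
  obtain ⟨_, ⟨i, hi, rfl⟩, hui⟩ := mem_upperC.mp hu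
  obtain ⟨a, b, hab, hai, hib, rfl, hb⟩ := hI i hi
  have ha : φ a ∈ F.basicSet (φ a) := mem_basicSet_self (hφ.mem_CR hab hb.symm)
  exact compat_basicSet _ ((hφ.isPathOnIn a b).image_subset_basicSet ha (hb ▸ ha)
    ⟨i, ⟨hai, hib⟩, rfl⟩) hui

lemma star_mem_invPartIn_upperC_image (hφ : F.IsSolIn W φ) {I : Set ℤ} {a b : ℤ}
    (hab : a < b) (hI : Set.Icc a b ⊆ I) (hper : φ a = φ b) :
    F.star (φ a) ∈ F.InvPartIn W (F.upperC (φ '' I)) := by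
  obtain ⟨ψ, hψ, hrange⟩ := (hφ.isPathOnIn a b).exists_isSolIn_range_eq hab hper
  refine mem_invPartIn_of_isSolIn compat_upperC
    (mem_upperC.mpr ⟨φ a, ⟨a, hI ⟨le_rfl, hab.le⟩, rfl⟩, star_mem_mclass _⟩) hψ ?_ ?_ <;>
    rw [hrange]
  · rw [star_star]
    by_cases h : φ a = F.star (φ a)
    · exact ⟨a, ⟨le_rfl, hab.le⟩, h⟩
    · exact ⟨a + 1, ⟨by omega, by omega⟩, eq_star_of_step (hφ a).1 h⟩
  · exact (Set.image_mono hI).trans subset_upperC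

lemma alphaIn_subset_basicSet (hφ : F.IsSolIn W φ) (hz : ∃ᶠ i in atBot, φ i = z) :
    F.alphaIn W φ ⊆ F.basicSet z := by
  obtain ⟨b, hb, hφb⟩ := frequently_atBot.mp hz 0
  refine (Set.iInter_subset _ (-b).toNat).trans fun u hu =>
    upperC_image_subset_basicSet hφ (fun i hi => ?_) hu.1
  obtain ⟨a, hai, hφa⟩ := frequently_atBot'.mp hz i
  exact ⟨a, b, by simp at hi; omega, hai.le, by simp at hi; omega, hφa, hφb⟩

lemma omegaIn_subset_basicSet (hφ : F.IsSolIn W φ) (hw : ∃ᶠ i in atTop, φ i = w) :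
    F.omegaIn W φ ⊆ F.basicSet w := by
  obtain ⟨a, ha, hφa⟩ := frequently_atTop.mp hw 0
  refine (Set.iInter_subset _ a.toNat).trans fun u hu =>
    upperC_image_subset_basicSet hφ (fun i hi => ?_) hu.1
  obtain ⟨b, hib, hφb⟩ := frequently_atTop'.mp hw i
  exact ⟨a, b, by simp at hi; omega, by simp at hi; omega, hib.le, hφa, hφb⟩

lemma star_mem_alphaIn (hφ : F.IsSolIn W φ) (hz : ∃ᶠ i in atBot, φ i = z) :
    F.star z ∈ F.alphaIn W φ := by
  refine Set.mem_iInter.mpr fun k => ?_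
  obtain ⟨b, hb, rfl⟩ := frequently_atBot.mp hz (-k)
  obtain ⟨a, hab, hφa⟩ := frequently_atBot'.mp hz b
  rw [← hφa]
  exact star_mem_invPartIn_upperC_image hφ hab (fun i hi => hi.2.trans hb) hφa

lemma star_mem_omegaIn (hφ : F.IsSolIn W φ) (hw : ∃ᶠ i in atTop, φ i = w) :
    F.star w ∈ F.omegaIn W φ := by
  refine Set.mem_iInter.mpr fun k => ?_
  obtain ⟨a, ha, rfl⟩ := frequently_atTop.mp hw k
  obtain ⟨b, hab, hφb⟩ := frequently_atTop'.mp hw a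
  exact star_mem_invPartIn_upperC_image hφ hab (fun i hi => ha.trans hi.1) hφb.symm

end Limits

section Order

def basicSetLE (F : MVField L) (B B' : {B : Set X // F.IsBasicSet B}) : Prop :=
  B = B' ∨ ∃ u ∈ (B' : Set X), ∃ v ∈ (B : Set X), F.PathConn Set.univ u v

lemma isPartialOrder_basicSetLE : IsPartialOrder _ F.basicSetLE where
  refl _ := .inl rfl
  trans := by
    rintro B₁ B₂ B₃ (rfl | ⟨u, hu, v, hv, huv⟩) (rfl | ⟨u', hu', v', hv', hu'v'⟩)
    · exact .inl rfl
    · exact .inr ⟨u', hu', v', hv', hu'v'⟩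
    · exact .inr ⟨u, hu, v, hv, huv⟩
    · exact .inr ⟨u', hu', v, hv, (hu'v'.trans (B₂.2.pathConn hv' hu)).trans huv⟩
  antisymm := by
    rintro B B' (h | ⟨u, hu, v, hv, huv⟩) h'
    · exact h
    rcases h' with h' | ⟨u', hu', v', hv', hu'v'⟩
    · exact h'.symm
    have hvu : F.PathConn Set.univ v u :=
      ((B.2.pathConn hv hu').trans hu'v').trans (B'.2.pathConn hv' hu)
    refine Subtype.ext ((B.2.eq_basicSet hv).trans ?_)
    rw [B'.2.eq_basicSet hu]
    exact basicSet_eq_of_mem (mem_basicSet.mpr ⟨huv, hvu⟩)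

lemma IsSolIn.exists_basicSetLE (hφ : F.IsSolIn W φ) :
    ∃ B B', F.basicSetLE B B' ∧ F.alphaIn W φ ⊆ B' ∧ F.omegaIn W φ ⊆ B := by
  obtain ⟨z, hz⟩ := exists_frequently_eq φ atBot
  obtain ⟨w, hw⟩ := exists_frequently_eq φ atTop
  obtain ⟨i, -, rfl⟩ := frequently_atBot.mp hz 0
  obtain ⟨a, hai, hφa⟩ := frequently_atBot'.mp hz i
  obtain ⟨j, hij, rfl⟩ := frequently_atTop.mp hw i
  obtain ⟨b, hjb, hφb⟩ := frequently_atTop'.mp hw j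
  have hzCR : φ i ∈ F.CR := hφa ▸ hφ.mem_CR hai hφa
  have hwCR : φ j ∈ F.CR := hφ.mem_CR hjb hφb.symm
  exact ⟨⟨_, isBasicSet_basicSet hwCR⟩, ⟨_, isBasicSet_basicSet hzCR⟩,
    .inr ⟨φ i, mem_basicSet_self hzCR, φ j, mem_basicSet_self hwCR,
      pathConn_of_mem_CR_of_reflTransGen hzCR (hφ.reflTransGen hij)⟩,
    alphaIn_subset_basicSet hφ hz, omegaIn_subset_basicSet hφ hw⟩

lemma IsBasicSet.range_subset (hB : F.IsBasicSet B) (hφ : F.IsSolIn W φ)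
    (hα : F.alphaIn W φ ⊆ B) (hω : F.omegaIn W φ ⊆ B) : Set.range φ ⊆ B := by
  obtain ⟨z, hz⟩ := exists_frequently_eq φ atBot
  obtain ⟨w, hw⟩ := exists_frequently_eq φ atTop
  obtain ⟨x, -, rfl⟩ := hB
  have hzB : z ∈ F.basicSet x :=
    mem_basicSet_of_star_eq (star_star z).symm (hα (star_mem_alphaIn hφ hz))
  have hwB : w ∈ F.basicSet x :=
    mem_basicSet_of_star_eq (star_star w).symm (hω (star_mem_omegaIn hφ hw))
  rintro _ ⟨m, rfl⟩
  obtain ⟨i, him, rfl⟩ := frequently_atBot.mp hz m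
  obtain ⟨j, hmj, rfl⟩ := frequently_atTop.mp hw m
  exact mem_basicSet_of_reflTransGen hzB hwB (hφ.reflTransGen him) (hφ.reflTransGen hmj)

end Order

end CMVF.MVField

theorem basic_sets_morse_decomposition_general (L : Lefschetz R X) (F : MVField L) :
    ∃ le : {B : Set X // F.IsBasicSet B} → {B : Set X // F.IsBasicSet B} → Prop,
      F.MorseDecompIn Set.univ le (fun B => (B : Set X)) :=
  ⟨F.basicSetLE, MVField.isPartialOrder_basicSetLE, fun B => B.2.isoInvIn,
    fun B B' hne => B.2.disjoint B'.2 (Subtype.coe_injective.ne hne),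
    fun _ hφ => hφ.exists_basicSetLE, fun _ hφ B => B.2.range_subset hφ⟩

/-- Theorem: the family of all basic sets of `𝒱` is a Morse decomposition of `X`
(for some admissible partial order). -/
theorem basic_sets_morse_decomposition (L : Lefschetz R X) (F : MVField L)
    (hX : F.InvariantIn Set.univ Set.univ) :
    ∃ le : {B : Set X // F.IsBasicSet B} → {B : Set X // F.IsBasicSet B} → Prop,
      F.MorseDecompIn Set.univ le (fun B => (B : Set X)) :=
  basic_sets_morse_decomposition_general L F
end

section
/- Let X be a Lefschetz complex over a ring R with unity and let 𝒱 be a multivector field on X with X invariant. For any Morse decomposition 𝓜 = {M_r : r ∈ ℙ} of X, the family 𝓑 of basic sets of 𝒱 is finer than 𝓜: every basic set B is contained in some M_r ∈ 𝓜. Consequently the family of basic sets is the unique finest Morse decomposition of X. -/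
open scoped Classical

open CMVF

variable {R : Type*} [Ring R] {X : Type*} [Fintype X]

namespace BasicAux

variable {L : Lefschetz R X} (F : MVField L)

lemma star_mem_mclass (x : X) : F.star x ∈ F.mclass x :=
  ((F.isMV _ (F.mclass_spec x).1).2).exists.choose_spec.1

lemma mclass_eq_of_mem {z x : X} (h : z ∈ F.mclass x) : F.mclass z = F.mclass x :=
  (F.cover z).unique (F.mclass_spec z) ⟨(F.mclass_spec x).1, h⟩

lemma mem_of_star_mem {S : Set X} (hS : F.InvariantIn Set.univ S) {y : X}
    (h : F.star y ∈ S) : y ∈ S := by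
  have hS' : F.InvPartIn Set.univ S = S := hS
  rw [← hS'] at h
  obtain ⟨-, φ, hsolφ, ⟨i, hi⟩, hall⟩ := h
  have h1 : F.star (F.star y) ∈ F.lowerC S := hi ▸ hall i
  have h2 : F.mclass (F.star (F.star y)) ⊆ S := h1.2
  have e1 : F.mclass (F.star y) = F.mclass y := mclass_eq_of_mem F (star_mem_mclass F y)
  have e2 : F.mclass (F.star (F.star y)) = F.mclass (F.star y) :=
    mclass_eq_of_mem F (star_mem_mclass F _)
  exact h2 (by rw [e2, e1]; exact (F.mclass_spec y).2)

/-- From a finite loop one obtains a Morse set containing the whole loop. -/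
lemma exists_r {P : Type*} [Finite P] {le : P → P → Prop} {M : P → Set X}
    (hM : F.MorseDecompIn Set.univ le M) (n : ℤ) (hn : 0 < n)
    (φ : ℤ → X) (hsol : ∀ i, 0 ≤ i → i < n → φ (i + 1) ∈ F.Pi (φ i))
    (hper : φ n = φ 0) :
    ∃ r, ∀ j : ℤ, φ (j % n) ∈ M r := by
  obtain ⟨hpo, hiso, hdisj, hconn, hrange⟩ := hM
  set ψ : ℤ → X := fun i => φ (i % n) with hψ
  have hsolψ : F.IsSolIn Set.univ ψ := by
    intro i
    have h0 : 0 ≤ i % n := Int.emod_nonneg i hn.ne'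
    have h1 : i % n < n := Int.emod_lt_of_pos i hn
    have key : (i + 1) % n = (i % n + 1) % n := by
      have hdm : i % n + 1 + n * (i / n) = i + 1 := by
        have := Int.mul_ediv_add_emod i n; linarith
      calc (i + 1) % n = (i % n + 1 + n * (i / n)) % n := by rw [hdm]
        _ = (i % n + 1) % n := by rw [Int.add_mul_emod_self_left]
    have heq : ψ (i + 1) = φ (i % n + 1) := by
      by_cases hc : i % n + 1 < n
      · show φ ((i + 1) % n) = _
        rw [key, Int.emod_eq_of_lt (by omega) hc]
      · have hc' : i % n + 1 = n := by omega
        show φ ((i + 1) % n) = _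
        rw [key, hc', Int.emod_self, ← hper]
    refine ⟨?_, trivial⟩
    rw [heq]
    exact hsol _ h0 h1
  have hray1 : ∀ k : ℕ, ψ '' {i : ℤ | i ≤ -(k : ℤ)} = Set.range ψ := by
    intro k
    apply Set.Subset.antisymm
    · rintro z ⟨j, -, rfl⟩; exact ⟨j, rfl⟩
    · rintro z ⟨j, rfl⟩
      have hj0 : 0 ≤ j % n := Int.emod_nonneg j hn.ne'
      have hj1 : j % n < n := Int.emod_lt_of_pos j hn
      refine ⟨j % n + n * (-(k + n)), ?_, ?_⟩
      · show j % n + n * (-(k + n)) ≤ -(k : ℤ)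
        nlinarith
      · show φ ((j % n + n * (-(k + n))) % n) = φ (j % n)
        rw [Int.add_mul_emod_self_left, Int.emod_eq_of_lt hj0 hj1]
  have hray2 : ∀ k : ℕ, ψ '' {i : ℤ | (k : ℤ) ≤ i} = Set.range ψ := by
    intro k
    apply Set.Subset.antisymm
    · rintro z ⟨j, -, rfl⟩; exact ⟨j, rfl⟩
    · rintro z ⟨j, rfl⟩
      have hj0 : 0 ≤ j % n := Int.emod_nonneg j hn.ne'
      have hj1 : j % n < n := Int.emod_lt_of_pos j hn
      refine ⟨j % n + n * k, ?_, ?_⟩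
      · show (k : ℤ) ≤ j % n + n * k
        nlinarith [Int.ofNat_nonneg k]
      · show φ ((j % n + n * k) % n) = φ (j % n)
        rw [Int.add_mul_emod_self_left, Int.emod_eq_of_lt hj0 hj1]
  have hαω : F.alphaIn Set.univ ψ = F.omegaIn Set.univ ψ := by
    unfold MVField.alphaIn MVField.omegaIn
    simp only [hray1, hray2]
  obtain ⟨r, r', hle, hα, hω⟩ := hconn ψ hsolψ
  have hrng : Set.range ψ ⊆ M r := hrange ψ hsolψ r (hαω ▸ hω) hω
  exact ⟨r, fun j => hrng ⟨j, rfl⟩⟩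

/-- Concatenation of two paths. -/
lemma concat (n₁ n₂ : ℤ) (h1 : 0 < n₁) (h2 : 0 < n₂) (p q : ℤ → X)
    (hp : ∀ i, 0 ≤ i → i < n₁ → p (i + 1) ∈ F.Pi (p i))
    (hq : ∀ i, 0 ≤ i → i < n₂ → q (i + 1) ∈ F.Pi (q i))
    (hpq : p n₁ = q 0) :
    ∃ χ : ℤ → X, (∀ i, 0 ≤ i → i < n₁ + n₂ → χ (i + 1) ∈ F.Pi (χ i)) ∧
      χ 0 = p 0 ∧ χ n₁ = p n₁ ∧ χ (n₁ + n₂) = q n₂ := by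
  refine ⟨fun i => if i ≤ n₁ then p i else q (i - n₁), ?_, ?_, ?_, ?_⟩
  · intro i hi0 hilt
    rcases lt_trichotomy i n₁ with hlt | heq | hgt
    · simp only [if_pos (by omega : i + 1 ≤ n₁), if_pos (by omega : i ≤ n₁)]
      exact hp i hi0 hlt
    · subst heq
      simp only [if_neg (by omega : ¬ i + 1 ≤ i), if_pos (le_refl i)]
      have : i + 1 - i = (0 : ℤ) + 1 := by ring
      rw [this, hpq]
      exact hq 0 le_rfl h2
    · simp only [if_neg (by omega : ¬ i + 1 ≤ n₁), if_neg (by omega : ¬ i ≤ n₁)]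
      have : i + 1 - n₁ = (i - n₁) + 1 := by ring
      rw [this]
      exact hq (i - n₁) (by omega) (by omega)
  · simp [h1.le]
  · simp
  · simp only [if_neg (by omega : ¬ n₁ + n₂ ≤ n₁)]
    congr 1; ring

end BasicAux

/-- Theorem: the family of basic sets is finer than any Morse decomposition:
every basic set is contained in some Morse set `M r`. -/
theorem basic_sets_finest (L : Lefschetz R X) (F : MVField L)
    (hX : F.InvariantIn Set.univ Set.univ)
    {P : Type*} [Finite P] (le : P → P → Prop) (M : P → Set X)
    (hM : F.MorseDecompIn Set.univ le M) :
    ∀ B : Set X, F.IsBasicSet B → ∃ r, B ⊆ M r := by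
  intro B hB
  obtain ⟨x, hxCR, hBdef⟩ := hB
  -- a loop at x★
  obtain ⟨a, b, φ, hab, hφ, -, hφa, hφb⟩ := hxCR
  set n : ℤ := b - a with hndef
  have hn : 0 < n := by omega
  have hp : ∀ i, 0 ≤ i → i < n → (fun i => φ (a + i)) (i + 1) ∈ F.Pi ((fun i => φ (a + i)) i) := by
    intro i h0 h1
    have : a + (i + 1) = (a + i) + 1 := by ring
    simp only [this]
    exact hφ (a + i) (by omega) (by omega)
  have hper : (fun i => φ (a + i)) n = (fun i => φ (a + i)) 0 := by
    simp only
    rw [show a + n = b by omega, show a + (0 : ℤ) = a by ring, hφa, hφb]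
  obtain ⟨r, hr⟩ := BasicAux.exists_r F hM n hn _ hp hper
  have hxstar : F.star x ∈ M r := by
    have := hr 0
    rw [Int.zero_emod] at this
    simpa only [add_zero, hφa] using this
  refine ⟨r, ?_⟩
  intro y hy
  rw [hBdef] at hy
  obtain ⟨hyCR, hxy, hyx⟩ := hy
  obtain ⟨a₁, b₁, φ₁, hab₁, hφ₁, -, hφ₁a, hφ₁b⟩ := hxy
  obtain ⟨a₂, b₂, φ₂, hab₂, hφ₂, -, hφ₂a, hφ₂b⟩ := hyx
  set n₁ : ℤ := b₁ - a₁ with hn₁def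
  set n₂ : ℤ := b₂ - a₂ with hn₂def
  have hn₁ : 0 < n₁ := by omega
  have hn₂ : 0 < n₂ := by omega
  have hp₁ : ∀ i, 0 ≤ i → i < n₁ →
      (fun i => φ₁ (a₁ + i)) (i + 1) ∈ F.Pi ((fun i => φ₁ (a₁ + i)) i) := by
    intro i h0 h1
    have : a₁ + (i + 1) = (a₁ + i) + 1 := by ring
    simp only [this]
    exact hφ₁ (a₁ + i) (by omega) (by omega)
  have hp₂ : ∀ i, 0 ≤ i → i < n₂ →
      (fun i => φ₂ (a₂ + i)) (i + 1) ∈ F.Pi ((fun i => φ₂ (a₂ + i)) i) := by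
    intro i h0 h1
    have : a₂ + (i + 1) = (a₂ + i) + 1 := by ring
    simp only [this]
    exact hφ₂ (a₂ + i) (by omega) (by omega)
  have hjoin : (fun i => φ₁ (a₁ + i)) n₁ = (fun i => φ₂ (a₂ + i)) 0 := by
    simp only
    rw [show a₁ + n₁ = b₁ by omega, show a₂ + (0 : ℤ) = a₂ by ring, hφ₁b, hφ₂a]
  obtain ⟨χ, hχsol, hχ0, hχn₁, hχend⟩ :=
    BasicAux.concat F n₁ n₂ hn₁ hn₂ _ _ hp₁ hp₂ hjoin
  have hχ0' : χ 0 = F.star x := by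
    rw [hχ0]; show φ₁ (a₁ + 0) = _; rw [show a₁ + (0 : ℤ) = a₁ by ring, hφ₁a]
  have hχn₁' : χ n₁ = F.star y := by
    rw [hχn₁]; show φ₁ (a₁ + n₁) = _; rw [show a₁ + n₁ = b₁ by omega, hφ₁b]
  have hχend' : χ (n₁ + n₂) = F.star x := by
    rw [hχend]; show φ₂ (a₂ + n₂) = _; rw [show a₂ + n₂ = b₂ by omega, hφ₂b]
  have hperχ : χ (n₁ + n₂) = χ 0 := by rw [hχend', hχ0']
  obtain ⟨r₂, hr₂⟩ := BasicAux.exists_r F hM (n₁ + n₂) (by omega) χ hχsol hperχ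
  have hx2 : F.star x ∈ M r₂ := by
    have := hr₂ 0
    rwa [Int.zero_emod, hχ0'] at this
  have hy2 : F.star y ∈ M r₂ := by
    have := hr₂ n₁
    rwa [Int.emod_eq_of_lt hn₁.le (by omega), hχn₁'] at this
  have hrr : r = r₂ := by
    by_contra hne
    exact Set.disjoint_left.mp (hM.2.2.1 r r₂ hne) hxstar hx2
  rw [hrr]
  exact BasicAux.mem_of_star_mem F (hM.2.1 r₂).1 hy2
end
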